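/- arXiv:2301.10537 — 5 statements merged into one kernel-verified Lean document; each statement's English description precedes it below -/
import Mathlib

section
/- Let l ≥ 1 and let C be an l×l symmetric matrix with nonnegative integer entries such that every diagonal entry C_{ii} is at least 2, and such that the graph on the index set {1,…,l} in which distinct indices i and j are adjacent if and only if C_{ij} > 0 is connected. Then the sum of all entries of C is at least 4l − 2. -/
/-- Let `l ≥ 1` and let `C` be an `l×l` symmetric matrix with nonnegative
integer entries, diagonal entries at least `2`, whose support graph (distinct `i, j`
adjacent iff `C i j > 0`) is connected. Then the sum of all entries of `C` is at
least `4l - 2`. -/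
theorem sum_cartan_entries_ge (l : ℕ) (hl : 1 ≤ l) (C : Fin l → Fin l → ℤ)
    (hsymm : ∀ i j, C i j = C j i)
    (hnonneg : ∀ i j, 0 ≤ C i j)
    (hdiag : ∀ i, 2 ≤ C i i)
    (hconn : (SimpleGraph.fromRel (fun i j : Fin l => 0 < C i j)).Connected) :
    4 * (l : ℤ) - 2 ≤ ∑ i : Fin l, ∑ j : Fin l, C i j := by
  classical
  set G := SimpleGraph.fromRel (fun i j : Fin l => 0 < C i j) with hG
  set v0 : Fin l := ⟨0, hl⟩ with hv0
  -- every vertex ≠ v0 has a neighbor strictly closer to v0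
  have key : ∀ w : Fin l, ∃ u, w ≠ v0 → G.Adj w u ∧ G.dist u v0 < G.dist w v0 := by
    intro w
    by_cases hw : w = v0
    · exact ⟨w, fun h => absurd hw h⟩
    · obtain ⟨p, _hp, hlen⟩ := (hconn w v0).exists_path_of_dist
      cases p with
      | nil => exact absurd rfl hw
      | @cons _ u _ h q =>
        refine ⟨u, fun _ => ⟨h, ?_⟩⟩
        have h1 : G.dist u v0 ≤ q.length := SimpleGraph.dist_le q
        have h2 : q.length + 1 = G.dist w v0 := by simpa using hlen
        omega
  choose g hg using key
  -- the sets of ordered pairs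
  have hadj : ∀ w : Fin l, w ≠ v0 → G.Adj w (g w) := fun w hw => (hg w hw).1
  have hdist : ∀ w : Fin l, w ≠ v0 → G.dist (g w) v0 < G.dist w v0 :=
    fun w hw => (hg w hw).2
  set E : Finset (Fin l) := Finset.univ.erase v0 with hE
  set S1 : Finset (Fin l × Fin l) := E.image (fun w => (w, g w)) with hS1
  set S2 : Finset (Fin l × Fin l) := E.image (fun w => (g w, w)) with hS2
  set D : Finset (Fin l × Fin l) := Finset.univ.image (fun i => (i, i)) with hD
  have hEmem : ∀ w, w ∈ E ↔ w ≠ v0 := by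
    intro w; simp [hE]
  have hcard1 : S1.card = l - 1 := by
    rw [hS1, Finset.card_image_of_injOn (fun a _ b _ h => (Prod.mk.injEq _ _ _ _).mp h |>.1)]
    simp [hE, Finset.card_erase_of_mem]
  have hcard2 : S2.card = l - 1 := by
    rw [hS2, Finset.card_image_of_injOn (fun a _ b _ h => (Prod.mk.injEq _ _ _ _).mp h |>.2)]
    simp [hE, Finset.card_erase_of_mem]
  have hdisj12 : Disjoint S1 S2 := by
    rw [Finset.disjoint_left]
    rintro p hp1 hp2
    rw [hS1, Finset.mem_image] at hp1
    rw [hS2, Finset.mem_image] at hp2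
    obtain ⟨w, hw, rfl⟩ := hp1
    obtain ⟨w', hw', he⟩ := hp2
    rw [hEmem] at hw hw'
    have h1 : g w' = w := (Prod.mk.injEq _ _ _ _).mp he |>.1
    have h2 : w' = g w := (Prod.mk.injEq _ _ _ _).mp he |>.2
    have d1 := hdist w hw
    have d2 := hdist w' hw'
    rw [h1] at d2
    rw [← h2] at d1
    omega
  have hSadj : ∀ p ∈ S1 ∪ S2, G.Adj p.1 p.2 := by
    intro p hp
    rcases Finset.mem_union.mp hp with hp | hp
    · rw [hS1, Finset.mem_image] at hp
      obtain ⟨w, hw, rfl⟩ := hp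
      exact hadj w ((hEmem w).mp hw)
    · rw [hS2, Finset.mem_image] at hp
      obtain ⟨w, hw, rfl⟩ := hp
      exact (hadj w ((hEmem w).mp hw)).symm
  have hSone : ∀ p ∈ S1 ∪ S2, (1 : ℤ) ≤ C p.1 p.2 := by
    intro p hp
    have h := hSadj p hp
    rw [hG, SimpleGraph.fromRel_adj] at h
    rcases h.2 with h' | h'
    · exact h'
    · rw [hsymm]; exact h'
  have hSne : ∀ p ∈ S1 ∪ S2, p.1 ≠ p.2 := by
    intro p hp
    exact (hSadj p hp).ne
  have hdisjD : Disjoint D (S1 ∪ S2) := by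
    rw [Finset.disjoint_left]
    rintro p hpD hpS
    rw [hD, Finset.mem_image] at hpD
    obtain ⟨i, _, rfl⟩ := hpD
    exact hSne _ hpS rfl
  -- sum estimates
  have htotal : ∑ i : Fin l, ∑ j : Fin l, C i j
      = ∑ p ∈ Finset.univ ×ˢ Finset.univ, C p.1 p.2 := by
    rw [Finset.sum_product]
  have hsubset : D ∪ (S1 ∪ S2) ⊆ Finset.univ ×ˢ Finset.univ := by
    intro p _; simp
  have hmono : ∑ p ∈ D ∪ (S1 ∪ S2), C p.1 p.2
      ≤ ∑ p ∈ Finset.univ ×ˢ Finset.univ, C p.1 p.2 :=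
    Finset.sum_le_sum_of_subset_of_nonneg hsubset (fun p _ _ => hnonneg p.1 p.2)
  have hsplit : ∑ p ∈ D ∪ (S1 ∪ S2), C p.1 p.2
      = ∑ p ∈ D, C p.1 p.2 + ∑ p ∈ S1 ∪ S2, C p.1 p.2 :=
    Finset.sum_union hdisjD
  have hDsum : (2 : ℤ) * l ≤ ∑ p ∈ D, C p.1 p.2 := by
    rw [hD, Finset.sum_image (fun a _ b _ h => ((Prod.mk.injEq _ _ _ _).mp h).1)]
    calc (2 : ℤ) * l = ∑ _i : Fin l, (2 : ℤ) := by
          simp [mul_comm]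
      _ ≤ ∑ i : Fin l, C i i := Finset.sum_le_sum (fun i _ => hdiag i)
  have hScard : (S1 ∪ S2).card = 2 * (l - 1) := by
    rw [Finset.card_union_of_disjoint hdisj12, hcard1, hcard2]; omega
  have hSsum : ((2 * (l - 1) : ℕ) : ℤ) ≤ ∑ p ∈ S1 ∪ S2, C p.1 p.2 := by
    rw [← hScard]
    calc ((S1 ∪ S2).card : ℤ) = ∑ _p ∈ S1 ∪ S2, (1 : ℤ) := by simp
      _ ≤ ∑ p ∈ S1 ∪ S2, C p.1 p.2 := Finset.sum_le_sum hSone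
  have hcast : ((2 * (l - 1) : ℕ) : ℤ) = 2 * (l : ℤ) - 2 := by
    push_cast [Nat.cast_sub hl]
    ring
  rw [htotal]
  rw [hcast] at hSsum
  linarith [hmono, hsplit ▸ hmono]
end

section
/- Let k be a field with char k ≠ 3. Then the k-algebras k[x,y]/(x³ + x²y, y²) and k[x,y]/(x³, y²) are isomorphic. -/
set_option maxHeartbeats 1600000 in
open MvPolynomial in
/-- If `char k ≠ 3` then `k[x,y]/(x³ + x²y, y²) ≅ k[x,y]/(x³, y²)`
as `k`-algebras. -/
theorem iso_of_char_ne_three (k : Type*) [Field k] (h : ringChar k ≠ 3) :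
    Nonempty ((MvPolynomial (Fin 2) k ⧸
        (Ideal.span {X 0 ^ 3 + X 0 ^ 2 * X 1, X 1 ^ 2} : Ideal (MvPolynomial (Fin 2) k)))
      ≃ₐ[k] (MvPolynomial (Fin 2) k ⧸
        (Ideal.span {X 0 ^ 3, X 1 ^ 2} : Ideal (MvPolynomial (Fin 2) k)))) := by
  -- 3 ≠ 0 in k
  have h3 : (3 : k) ≠ 0 := by
    intro h0
    have hd : ringChar k ∣ 3 := by
      rw [← Nat.cast_ofNat] at h0
      exact ringChar.dvd h0
    rcases (Nat.dvd_prime (by norm_num)).1 hd with h1 | h1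
    · exact CharP.ringChar_ne_one h1
    · exact h h1
  set c : k := 3⁻¹ with hc
  set t : MvPolynomial (Fin 2) k := C c with htdef
  have ht : 3 * t = 1 := by
    rw [htdef, show (3 : MvPolynomial (Fin 2) k) = C 3 from (map_ofNat C 3).symm, ← map_mul,
      mul_inv_cancel₀ h3, map_one]
  -- the automorphism x ↦ x + t y, y ↦ y
  set f : MvPolynomial (Fin 2) k →ₐ[k] MvPolynomial (Fin 2) k :=
    aeval ![X 0 + t * X 1, X 1] with hf
  set g : MvPolynomial (Fin 2) k →ₐ[k] MvPolynomial (Fin 2) k :=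
    aeval ![X 0 - t * X 1, X 1] with hg
  have hfg : f.comp g = AlgHom.id k _ := by
    apply MvPolynomial.algHom_ext
    intro i
    fin_cases i <;> simp [hf, hg, htdef, aeval_X]
  have hgf : g.comp f = AlgHom.id k _ := by
    apply MvPolynomial.algHom_ext
    intro i
    fin_cases i <;> simp [hf, hg, htdef, aeval_X]
  let e : MvPolynomial (Fin 2) k ≃ₐ[k] MvPolynomial (Fin 2) k :=
    AlgEquiv.ofAlgHom f g hfg hgf
  have hfX0 : f (X 0) = X 0 + t * X 1 := by simp [hf]
  have hfX1 : f (X 1) = X 1 := by simp [hf]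
  have key : (Ideal.span {X 0 ^ 3 + X 0 ^ 2 * X 1, X 1 ^ 2} : Ideal (MvPolynomial (Fin 2) k))
      = (Ideal.span {X 0 ^ 3, X 1 ^ 2}).map (e : MvPolynomial (Fin 2) k →+* _) := by
    have hmap : (Ideal.span {X 0 ^ 3, X 1 ^ 2} : Ideal (MvPolynomial (Fin 2) k)).map
        (e : MvPolynomial (Fin 2) k →+* _)
        = Ideal.span {(X 0 + t * X 1) ^ 3, X 1 ^ 2} := by
      rw [Ideal.map_span, Set.image_pair]
      have e1 : (e : MvPolynomial (Fin 2) k →+* MvPolynomial (Fin 2) k) (X 0 ^ 3)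
          = (X 0 + t * X 1) ^ 3 := by
        show f (X 0 ^ 3) = _
        rw [map_pow, hfX0]
      have e2 : (e : MvPolynomial (Fin 2) k →+* MvPolynomial (Fin 2) k) (X 1 ^ 2)
          = X 1 ^ 2 := by
        show f (X 1 ^ 2) = _
        rw [map_pow, hfX1]
      rw [e1, e2]
    rw [hmap]
    apply le_antisymm <;> rw [Ideal.span_le] <;> rintro p (rfl | rfl)
    · -- x³ + x²y ∈ ((x+ty)³, y²)
      have : (X 0 ^ 3 + X 0 ^ 2 * X 1 : MvPolynomial (Fin 2) k)
          = (X 0 + t * X 1) ^ 3 - (3 * t ^ 2 * X 0 + t ^ 3 * X 1) * X 1 ^ 2 := by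
        linear_combination (-(X 0 ^ 2 * X 1)) * ht
      rw [this]
      exact sub_mem (Ideal.subset_span (by simp))
        (Ideal.mul_mem_left _ _ (Ideal.subset_span (by simp)))
    · exact Ideal.subset_span (by simp)
    · -- (x+ty)³ ∈ (x³+x²y, y²)
      have : ((X 0 + t * X 1 : MvPolynomial (Fin 2) k)) ^ 3
          = (X 0 ^ 3 + X 0 ^ 2 * X 1) + (3 * t ^ 2 * X 0 + t ^ 3 * X 1) * X 1 ^ 2 := by
        linear_combination X 0 ^ 2 * X 1 * ht
      rw [this]
      exact add_mem (Ideal.subset_span (by simp))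
        (Ideal.mul_mem_left _ _ (Ideal.subset_span (by simp)))
    · exact Ideal.subset_span (by simp)
  exact ⟨(Ideal.quotientEquivAlg (Ideal.span {X 0 ^ 3, X 1 ^ 2})
    (Ideal.span {X 0 ^ 3 + X 0 ^ 2 * X 1, X 1 ^ 2}) e key).symm⟩
end

section
/- Let k be a field with char k = 2. Then the k-algebras k[x,y]/(x³, y² + x²y) and k[x,y]/(x³, y²) are not isomorphic. -/
open MvPolynomial Finsupp

section Aux

variable {k : Type*} [Field k] [CharP k 2]

private lemma coeff_sq_odd (p : MvPolynomial (Fin 2) k) (m : Fin 2 →₀ ℕ)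
    (hm : ∀ n : Fin 2 →₀ ℕ, n + n ≠ m) : coeff m (p * p) = 0 := by
  classical
  rw [coeff_mul]
  refine Finset.sum_involution (fun a _ => (a.2, a.1)) ?_ ?_ ?_ ?_
  · intro a _
    rw [mul_comm]
    exact CharTwo.add_self_eq_zero _
  · intro a ha _ heq
    have h1 : a.2 = a.1 := congrArg Prod.fst heq
    have h2 : a.1 + a.2 = m := Finset.HasAntidiagonal.mem_antidiagonal.mp ha
    exact hm a.1 (by rw [← h1] at h2 ⊢; rw [h1] at h2 ⊢; exact h2)
  · intro a ha
    rw [Finset.HasAntidiagonal.mem_antidiagonal] at ha ⊢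
    rw [add_comm]; exact ha
  · intro a _
    rfl

private lemma coeff_sq_even (p : MvPolynomial (Fin 2) k) (n : Fin 2 →₀ ℕ) :
    coeff (n + n) (p * p) = coeff n p * coeff n p := by
  classical
  rw [coeff_mul]
  have hmem : ((n, n) : (Fin 2 →₀ ℕ) × (Fin 2 →₀ ℕ)) ∈ Finset.HasAntidiagonal.antidiagonal (n + n) := by
    rw [Finset.HasAntidiagonal.mem_antidiagonal]
  rw [← Finset.add_sum_erase _ _ hmem]
  have hz : ∑ x ∈ (Finset.HasAntidiagonal.antidiagonal (n + n)).erase (n, n),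
      coeff x.1 p * coeff x.2 p = 0 := by
    refine Finset.sum_involution (fun a _ => (a.2, a.1)) ?_ ?_ ?_ ?_
    · intro a _
      rw [mul_comm]
      exact CharTwo.add_self_eq_zero _
    · intro a ha _ heq
      have h1 : a.2 = a.1 := congrArg Prod.fst heq
      have h2 : a.1 + a.2 = n + n := Finset.HasAntidiagonal.mem_antidiagonal.mp (Finset.mem_of_mem_erase ha)
      have h3 : a.1 = n := by
        rw [← h1] at h2
        ext i
        have := DFunLike.congr_fun h2 i
        simp only [Finsupp.add_apply] at this
        rw [← h1]
        omega
      have : a = (n, n) := by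
        rw [Prod.ext_iff]; exact ⟨h3, h1.trans h3⟩
      exact absurd this (Finset.ne_of_mem_erase ha)
    · intro a ha
      rw [Finset.mem_erase] at ha ⊢
      constructor
      · intro heq
        apply ha.1
        have h1 : a.2 = n := congrArg Prod.fst heq
        have h2 : a.1 = n := congrArg Prod.snd heq
        rw [Prod.ext_iff]; exact ⟨h2, h1⟩
      · rw [Finset.HasAntidiagonal.mem_antidiagonal] at ha ⊢
        rw [add_comm]; exact ha.2
    · intro a _
      rfl
  rw [hz, add_zero]

private lemma low_coeffs (p : MvPolynomial (Fin 2) k)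
    (hp : p * p ∈ Ideal.span {(X 0 : MvPolynomial (Fin 2) k) ^ 3, X 1 ^ 2 + X 0 ^ 2 * X 1}) :
    coeff 0 p = 0 ∧ coeff (Finsupp.single 0 1) p = 0 ∧ coeff (Finsupp.single 1 1) p = 0 := by
  classical
  obtain ⟨u, v, huv⟩ := Ideal.mem_span_pair.mp hp
  have hX21 : (X 0 : MvPolynomial (Fin 2) k) ^ 2 * X 1
      = monomial (Finsupp.single 0 2 + Finsupp.single 1 1) 1 := by
    have : (X 1 : MvPolynomial (Fin 2) k) = X 1 ^ 1 := (pow_one _).symm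
    rw [this, X_pow_eq_monomial, X_pow_eq_monomial, monomial_mul, mul_one]
  have key : ∀ m : Fin 2 →₀ ℕ, coeff m (p * p) =
      (if Finsupp.single 0 3 ≤ m then coeff (m - Finsupp.single 0 3) u * 1 else 0)
      + ((if Finsupp.single 1 2 ≤ m then coeff (m - Finsupp.single 1 2) v * 1 else 0)
        + (if Finsupp.single 0 2 + Finsupp.single 1 1 ≤ m then
            coeff (m - (Finsupp.single 0 2 + Finsupp.single 1 1)) v * 1 else 0)) := by
    intro m
    rw [← huv, coeff_add, mul_add, coeff_add, X_pow_eq_monomial, coeff_mul_monomial',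
      X_pow_eq_monomial, coeff_mul_monomial', hX21, coeff_mul_monomial']
  -- notation for the simp set deciding Finsupp inequalities
  have ha : coeff 0 p = 0 := by
    have h := key 0
    rw [if_neg (by simp [Finsupp.le_def, Finsupp.single_apply, Fin.forall_fin_two]),
      if_neg (by simp [Finsupp.le_def, Finsupp.single_apply, Fin.forall_fin_two]),
      if_neg (by simp [Finsupp.le_def, Finsupp.single_apply, Finsupp.add_apply,
        Fin.forall_fin_two])] at h
    have h0 : (0 : Fin 2 →₀ ℕ) = 0 + 0 := by simp
    rw [h0, coeff_sq_even] at h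
    simpa using mul_self_eq_zero.mp (by simpa using h)
  have hb : coeff (Finsupp.single 0 1) p = 0 := by
    have h := key (Finsupp.single 0 2)
    rw [if_neg (by simp [Finsupp.le_def, Finsupp.single_apply, Fin.forall_fin_two]),
      if_neg (by simp [Finsupp.le_def, Finsupp.single_apply, Fin.forall_fin_two]),
      if_neg (by simp [Finsupp.le_def, Finsupp.single_apply, Finsupp.add_apply,
        Fin.forall_fin_two])] at h
    have h0 : (Finsupp.single (0 : Fin 2) 2) = Finsupp.single 0 1 + Finsupp.single 0 1 := by
      rw [← Finsupp.single_add]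
    rw [h0, coeff_sq_even] at h
    exact mul_self_eq_zero.mp (by simpa using h)
  have hv : coeff 0 v = 0 := by
    have h := key (Finsupp.single 0 2 + Finsupp.single 1 1)
    rw [if_neg (by simp [Finsupp.le_def, Finsupp.single_apply, Finsupp.add_apply,
        Fin.forall_fin_two]),
      if_neg (by simp [Finsupp.le_def, Finsupp.single_apply, Finsupp.add_apply,
        Fin.forall_fin_two]),
      if_pos le_rfl] at h
    rw [coeff_sq_odd p _ ?_] at h
    · simpa using h.symm
    · intro n hn
      have := DFunLike.congr_fun hn 1
      simp [Finsupp.add_apply, Finsupp.single_apply] at this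
      omega
  have hc : coeff (Finsupp.single 1 1) p = 0 := by
    have h := key (Finsupp.single 1 2)
    rw [if_neg (by simp [Finsupp.le_def, Finsupp.single_apply, Fin.forall_fin_two]),
      if_pos le_rfl,
      if_neg (by simp [Finsupp.le_def, Finsupp.single_apply, Finsupp.add_apply,
        Fin.forall_fin_two])] at h
    have h0 : (Finsupp.single (1 : Fin 2) 2) = Finsupp.single 1 1 + Finsupp.single 1 1 := by
      rw [← Finsupp.single_add]
    rw [h0, coeff_sq_even] at h
    refine mul_self_eq_zero.mp ?_
    rw [h]
    simp [hv]
  exact ⟨ha, hb, hc⟩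


private def Sset : Set (Fin 2 →₀ ℕ) :=
  {Finsupp.single 0 2, Finsupp.single 0 1 + Finsupp.single 1 1, Finsupp.single 1 2}

private lemma mem_M (p : MvPolynomial (Fin 2) k)
    (h0 : coeff 0 p = 0) (h1 : coeff (Finsupp.single 0 1) p = 0)
    (h2 : coeff (Finsupp.single 1 1) p = 0) :
    p ∈ Ideal.span ((fun s => (monomial s (1 : k))) '' Sset) := by
  rw [mem_ideal_span_monomial_image]
  intro m hm
  rw [MvPolynomial.mem_support_iff] at hm
  by_cases hA : 2 ≤ m 0
  · exact ⟨Finsupp.single 0 2, Or.inl rfl, Finsupp.single_le_iff.mpr hA⟩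
  by_cases hB : 2 ≤ m 1
  · exact ⟨Finsupp.single 1 2, Or.inr (Or.inr rfl), Finsupp.single_le_iff.mpr hB⟩
  by_cases hC : 1 ≤ m 0 ∧ 1 ≤ m 1
  · refine ⟨Finsupp.single 0 1 + Finsupp.single 1 1, Or.inr (Or.inl rfl), ?_⟩
    rw [Finsupp.le_def]
    intro i
    fin_cases i <;> simp [Finsupp.add_apply, Finsupp.single_apply, hC.1, hC.2]
  · exfalso
    push_neg at hA hB hC
    have hA' : m 0 = 0 ∨ m 0 = 1 := by omega
    have hB' : m 1 = 0 ∨ m 1 = 1 := by omega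
    rcases hA' with ha | ha <;> rcases hB' with hb | hb
    · apply hm; rw [show m = 0 from ?_]; exact h0
      ext i; fin_cases i <;> simpa
    · apply hm; rw [show m = Finsupp.single 1 1 from ?_]; exact h2
      ext i; fin_cases i <;> simp [Finsupp.single_apply, ha, hb]
    · apply hm; rw [show m = Finsupp.single 0 1 from ?_]; exact h1
      ext i; fin_cases i <;> simp [Finsupp.single_apply, ha, hb]
    · omega


private lemma mul_mem_IA {p q : MvPolynomial (Fin 2) k}
    (hp : p ∈ Ideal.span ((fun s => (monomial s (1 : k))) '' Sset))
    (hq : q ∈ Ideal.span ((fun s => (monomial s (1 : k))) '' Sset)) :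
    p * q ∈ Ideal.span {(X 0 : MvPolynomial (Fin 2) k) ^ 3, X 1 ^ 2 + X 0 ^ 2 * X 1} := by
  have himg : ((fun s => (monomial s (1 : k))) '' Sset)
      = {(X 0 : MvPolynomial (Fin 2) k) ^ 2, X 0 * X 1, X 1 ^ 2} := by
    have e1 : monomial (Finsupp.single (0 : Fin 2) 2) (1 : k) = X 0 ^ 2 :=
      X_pow_eq_monomial.symm
    have e3 : monomial (Finsupp.single (1 : Fin 2) 2) (1 : k) = X 1 ^ 2 :=
      X_pow_eq_monomial.symm
    have e2 : monomial (Finsupp.single (0 : Fin 2) 1 + Finsupp.single 1 1) (1 : k)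
        = X 0 * X 1 := by
      rw [show ((X 0 : MvPolynomial (Fin 2) k) * X 1) = X 0 ^ 1 * X 1 ^ 1 by ring,
        X_pow_eq_monomial, X_pow_eq_monomial, monomial_mul, mul_one]
    rw [Sset, Set.image_insert_eq, Set.image_insert_eq, Set.image_singleton, e1, e2, e3]
  rw [himg] at hp hq
  have hle : Ideal.span ({(X 0 : MvPolynomial (Fin 2) k) ^ 2, X 0 * X 1, X 1 ^ 2} :
        Set (MvPolynomial (Fin 2) k))
      * Ideal.span {(X 0 : MvPolynomial (Fin 2) k) ^ 2, X 0 * X 1, X 1 ^ 2}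
      ≤ Ideal.span {(X 0 : MvPolynomial (Fin 2) k) ^ 3, X 1 ^ 2 + X 0 ^ 2 * X 1} := by
    rw [Ideal.span_mul_span, Ideal.span_le]
    rintro z hz
    simp only [Set.mem_mul, Set.mem_iUnion, Set.mem_singleton_iff, Set.mem_insert_iff] at hz
    obtain ⟨s, hs, t, ht, rfl⟩ := hz
    rw [SetLike.mem_coe, Ideal.mem_span_pair]
    rcases hs with rfl | rfl | rfl <;> rcases ht with rfl | rfl | rfl
    · exact ⟨X 0, 0, by ring⟩
    · exact ⟨X 1, 0, by ring⟩
    · exact ⟨-(X 0 * X 1), X 0 ^ 2, by ring⟩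
    · exact ⟨X 1, 0, by ring⟩
    · exact ⟨-(X 0 * X 1), X 0 ^ 2, by ring⟩
    · exact ⟨-(X 1 ^ 2), X 0 * X 1, by ring⟩
    · exact ⟨-(X 0 * X 1), X 0 ^ 2, by ring⟩
    · exact ⟨-(X 1 ^ 2), X 0 * X 1, by ring⟩
    · exact ⟨X 0 * X 1 ^ 2, X 1 ^ 2 - X 0 ^ 2 * X 1, by ring⟩
  exact hle (Ideal.mul_mem_mul hp hq)

private lemma not_mem_IB :
    (X 0 : MvPolynomial (Fin 2) k) ^ 2 * X 1
      ∉ Ideal.span {(X 0 : MvPolynomial (Fin 2) k) ^ 3, X 1 ^ 2} := by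
  classical
  intro hmem
  obtain ⟨u, v, huv⟩ := Ideal.mem_span_pair.mp hmem
  have hX21 : (X 0 : MvPolynomial (Fin 2) k) ^ 2 * X 1
      = monomial (Finsupp.single 0 2 + Finsupp.single 1 1) 1 := by
    rw [show ((X 0 : MvPolynomial (Fin 2) k) ^ 2 * X 1) = X 0 ^ 2 * X 1 ^ 1 by ring,
      X_pow_eq_monomial, X_pow_eq_monomial, monomial_mul, mul_one]
  have h := congrArg (coeff (Finsupp.single 0 2 + Finsupp.single 1 1)) huv
  rw [coeff_add, X_pow_eq_monomial, coeff_mul_monomial', X_pow_eq_monomial,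
    coeff_mul_monomial', hX21, coeff_monomial, if_pos rfl,
    if_neg (by simp [Finsupp.le_def, Finsupp.single_apply, Finsupp.add_apply,
      Fin.forall_fin_two]),
    if_neg (by simp [Finsupp.le_def, Finsupp.single_apply, Finsupp.add_apply,
      Fin.forall_fin_two])] at h
  simp at h

end Aux

open MvPolynomial in
/-- If `char k = 2` then `k[x,y]/(x³, y² + x²y)` and `k[x,y]/(x³, y²)`
are not isomorphic as `k`-algebras. -/
theorem not_iso_of_char_two (k : Type*) [Field k] (h : ringChar k = 2) :
    IsEmpty ((MvPolynomial (Fin 2) k ⧸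
        (Ideal.span {X 0 ^ 3, X 1 ^ 2 + X 0 ^ 2 * X 1} : Ideal (MvPolynomial (Fin 2) k)))
      ≃ₐ[k] (MvPolynomial (Fin 2) k ⧸
        (Ideal.span {X 0 ^ 3, X 1 ^ 2} : Ideal (MvPolynomial (Fin 2) k)))) := by
  haveI : CharP k 2 := h ▸ ringChar.charP k
  constructor
  intro e
  set IA : Ideal (MvPolynomial (Fin 2) k) :=
    Ideal.span {X 0 ^ 3, X 1 ^ 2 + X 0 ^ 2 * X 1} with hIA
  set IB : Ideal (MvPolynomial (Fin 2) k) := Ideal.span {X 0 ^ 3, X 1 ^ 2} with hIB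
  set u : MvPolynomial (Fin 2) k ⧸ IA := e.symm (Ideal.Quotient.mk IB (X 1)) with hu
  set v : MvPolynomial (Fin 2) k ⧸ IA := e.symm (Ideal.Quotient.mk IB (X 0 ^ 2)) with hv
  have huu : u * u = 0 := by
    rw [hu, ← map_mul, ← map_mul]
    have : Ideal.Quotient.mk IB (X 1 * X 1) = 0 := by
      rw [Ideal.Quotient.eq_zero_iff_mem]
      have : (X 1 : MvPolynomial (Fin 2) k) * X 1 = X 1 ^ 2 := by ring
      rw [this]
      exact Ideal.subset_span (Or.inr rfl)
    rw [this, map_zero]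
  have hvv : v * v = 0 := by
    rw [hv, ← map_mul, ← map_mul]
    have : Ideal.Quotient.mk IB (X 0 ^ 2 * X 0 ^ 2) = 0 := by
      rw [Ideal.Quotient.eq_zero_iff_mem, hIB, Ideal.mem_span_pair]
      exact ⟨X 0, 0, by ring⟩
    rw [this, map_zero]
  have huv : u * v ≠ 0 := by
    rw [hu, hv, ← map_mul, ← map_mul]
    intro h0
    have h1 : Ideal.Quotient.mk IB (X 1 * X 0 ^ 2) = 0 := by
      have := e.symm.injective (h0.trans (map_zero e.symm).symm)
      exact this
    rw [Ideal.Quotient.eq_zero_iff_mem] at h1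
    exact not_mem_IB (by rwa [mul_comm] at h1)
  obtain ⟨p, hp⟩ := Ideal.Quotient.mk_surjective u
  obtain ⟨q, hq⟩ := Ideal.Quotient.mk_surjective v
  have hpp : p * p ∈ IA := by
    rw [← Ideal.Quotient.eq_zero_iff_mem, map_mul, hp, huu]
  have hqq : q * q ∈ IA := by
    rw [← Ideal.Quotient.eq_zero_iff_mem, map_mul, hq, hvv]
  obtain ⟨ha, hb, hc⟩ := low_coeffs p hpp
  obtain ⟨ha', hb', hc'⟩ := low_coeffs q hqq
  have hpq : p * q ∈ IA := mul_mem_IA (mem_M p ha hb hc) (mem_M q ha' hb' hc')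
  apply huv
  rw [← hp, ← hq, ← map_mul, Ideal.Quotient.eq_zero_iff_mem]
  exact hpq
end

section
/- Let k be a field with char k = 3. Then the k-algebras k[x,y]/(x³ + x²y, y²) and k[x,y]/(x³, y²) are not isomorphic. -/
open MvPolynomial

private lemma aux_X_pow2_mul {k : Type*} [Field k] :
    (X 0 ^ 2 * X 1 : MvPolynomial (Fin 2) k)
      = monomial (Finsupp.single 0 2 + Finsupp.single 1 1) 1 := by
  rw [X_pow_eq_monomial,
    show (X 1 : MvPolynomial (Fin 2) k) = monomial (Finsupp.single 1 1) 1 from rfl,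
    monomial_mul, one_mul]

/-- The linear functional `coeff x³ - coeff x²y` vanishes on the ideal `(x³ + x²y, y²)`. -/
private lemma coeff_eq_of_mem_spanA {k : Type*} [Field k] {f : MvPolynomial (Fin 2) k}
    (hf : f ∈ (Ideal.span {X 0 ^ 3 + X 0 ^ 2 * X 1, X 1 ^ 2} : Ideal (MvPolynomial (Fin 2) k))) :
    coeff (Finsupp.single 0 3) f = coeff (Finsupp.single 0 2 + Finsupp.single 1 1) f := by
  obtain ⟨a, b, rfl⟩ := Ideal.mem_span_pair.mp hf
  have hn1 : ¬ (Finsupp.single 0 2 + Finsupp.single 1 1 : Fin 2 →₀ ℕ) ≤ Finsupp.single 0 3 := by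
    intro hle; have := (Finsupp.le_def.mp hle) 1; simp [Finsupp.single_apply] at this
  have hn2 : ¬ (Finsupp.single 0 3 : Fin 2 →₀ ℕ) ≤ Finsupp.single 0 2 + Finsupp.single 1 1 := by
    intro hle; have := (Finsupp.le_def.mp hle) 0; simp [Finsupp.single_apply] at this
  have hn3 : ¬ (Finsupp.single 1 2 : Fin 2 →₀ ℕ) ≤ Finsupp.single 0 3 := by
    intro hle; have := (Finsupp.le_def.mp hle) 1; simp [Finsupp.single_apply] at this
  have hn4 : ¬ (Finsupp.single 1 2 : Fin 2 →₀ ℕ) ≤ Finsupp.single 0 2 + Finsupp.single 1 1 := by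
    intro hle; have := (Finsupp.le_def.mp hle) 1; simp [Finsupp.single_apply] at this
  rw [mul_add]
  rw [coeff_add, coeff_add, coeff_add, coeff_add,
    X_pow_eq_monomial (n := (0 : Fin 2)), aux_X_pow2_mul, X_pow_eq_monomial (n := (1 : Fin 2)),
    coeff_mul_monomial', coeff_mul_monomial', coeff_mul_monomial', coeff_mul_monomial',
    coeff_mul_monomial', coeff_mul_monomial']
  rw [if_pos le_rfl, if_pos le_rfl, if_neg hn1, if_neg hn2, if_neg hn3, if_neg hn4]
  simp

/-- `x³ - c` is never in the ideal `(x³ + x²y, y²)`. -/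
private lemma cube_not_scalar {k : Type*} [Field k] (c : k) :
    X 0 ^ 3 - C c ∉
      (Ideal.span {X 0 ^ 3 + X 0 ^ 2 * X 1, X 1 ^ 2} : Ideal (MvPolynomial (Fin 2) k)) := by
  intro hmem
  have h := coeff_eq_of_mem_spanA hmem
  have hne : (Finsupp.single 0 3 : Fin 2 →₀ ℕ) ≠ 0 := by
    simp [Finsupp.single_eq_zero]
  have hne2 : (Finsupp.single 0 2 + Finsupp.single 1 1 : Fin 2 →₀ ℕ) ≠ Finsupp.single 0 3 := by
    intro he
    have := DFunLike.congr_fun he 1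
    simp [Finsupp.single_apply] at this
  have hne3 : (Finsupp.single 0 2 + Finsupp.single 1 1 : Fin 2 →₀ ℕ) ≠ 0 := by
    intro he
    have := DFunLike.congr_fun he 1
    simp [Finsupp.single_apply] at this
  rw [coeff_sub, coeff_sub, X_pow_eq_monomial, coeff_monomial, coeff_monomial,
    if_pos rfl, if_neg (Ne.symm hne2), coeff_C, coeff_C, if_neg (Ne.symm hne),
    if_neg (Ne.symm hne3)] at h
  simp at h

open MvPolynomial in
/-- If `char k = 3` then `k[x,y]/(x³ + x²y, y²)` and `k[x,y]/(x³, y²)`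
are not isomorphic as `k`-algebras. -/
theorem not_iso_of_char_three (k : Type*) [Field k] (h : ringChar k = 3) :
    IsEmpty ((MvPolynomial (Fin 2) k ⧸
        (Ideal.span {X 0 ^ 3 + X 0 ^ 2 * X 1, X 1 ^ 2} : Ideal (MvPolynomial (Fin 2) k)))
      ≃ₐ[k] (MvPolynomial (Fin 2) k ⧸
        (Ideal.span {X 0 ^ 3, X 1 ^ 2} : Ideal (MvPolynomial (Fin 2) k)))) := by
  set IA : Ideal (MvPolynomial (Fin 2) k) := Ideal.span {X 0 ^ 3 + X 0 ^ 2 * X 1, X 1 ^ 2}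
  set IB : Ideal (MvPolynomial (Fin 2) k) := Ideal.span {X 0 ^ 3, X 1 ^ 2}
  haveI : CharP k 3 := h ▸ ringChar.charP k
  haveI : Fact (Nat.Prime 3) := ⟨by norm_num⟩
  -- IB is a proper ideal, so the quotient B is nontrivial
  have hIB : IB ≠ ⊤ := by
    intro htop
    have h1 : (1 : MvPolynomial (Fin 2) k) ∈ IB := htop ▸ Submodule.mem_top
    obtain ⟨a, b, hab⟩ := Ideal.mem_span_pair.mp h1
    have := congrArg constantCoeff hab
    simp [constantCoeff_X] at this
  haveI : Nontrivial (MvPolynomial (Fin 2) k ⧸ IB) :=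
    Ideal.Quotient.nontrivial_iff.mpr hIB
  haveI : CharP (MvPolynomial (Fin 2) k ⧸ IB) 3 :=
    charP_of_injective_algebraMap (algebraMap k _).injective 3
  -- every element of B cubes to a scalar
  have hcube : ∀ z : MvPolynomial (Fin 2) k ⧸ IB,
      ∃ c : k, z ^ 3 = algebraMap k _ c := by
    intro z
    obtain ⟨p, rfl⟩ := Ideal.Quotient.mk_surjective z
    induction p using MvPolynomial.induction_on with
    | C a =>
        refine ⟨a ^ 3, ?_⟩
        show (Ideal.Quotient.mk IB (C a)) ^ 3 = Ideal.Quotient.mk IB (C (a ^ 3))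
        rw [← RingHom.map_pow, C_pow]
    | add p q hp hq =>
        obtain ⟨c, hc⟩ := hp
        obtain ⟨d, hd⟩ := hq
        refine ⟨c + d, ?_⟩
        rw [RingHom.map_add, add_pow_char _ _ 3, hc, hd, ← map_add]
    | mul_X p i _ =>
        refine ⟨0, ?_⟩
        have hXi : (Ideal.Quotient.mk IB (X i)) ^ 3 = 0 := by
          rw [← RingHom.map_pow, Ideal.Quotient.eq_zero_iff_mem]
          fin_cases i
          · exact Ideal.subset_span (Or.inl rfl)
          · show (X 1 : MvPolynomial (Fin 2) k) ^ 3 ∈ IB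
            have h3 : (X 1 : MvPolynomial (Fin 2) k) ^ 3 = X 1 ^ 2 * X 1 := by ring
            rw [h3]
            exact Ideal.mul_mem_right _ _ (Ideal.subset_span (Or.inr rfl))
        rw [RingHom.map_mul, mul_pow, hXi, mul_zero, RingHom.map_zero]
  constructor
  intro e
  obtain ⟨c, hc⟩ := hcube (e (Ideal.Quotient.mk IA (X 0)))
  rw [← map_pow, ← AlgEquiv.commutes e c] at hc
  have hA : (Ideal.Quotient.mk IA (X 0)) ^ 3 = algebraMap k _ c := e.injective hc
  rw [← map_pow] at hA
  have : Ideal.Quotient.mk IA (X 0 ^ 3 - C c) = 0 := by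
    rw [RingHom.map_sub, hA, sub_eq_zero]; rfl
  exact cube_not_scalar c (Ideal.Quotient.eq_zero_iff_mem.mp this)
end

section
/- Let k be a field of characteristic 2 and let R = k[w,x,y,z]/(w²x, w²y, w² + z², x², xy, xz, y², yz, z³). Then dim_k R = 10, and the images of 1, w, x, y, z, w², wx, wy, wz, w³ form a k-basis of R. -/
open MvPolynomial Finsupp

lemma fin4_ext_CR (d e : Fin 4 →₀ ℕ) : d = e ↔ d 0 = e 0 ∧ d 1 = e 1 ∧ d 2 = e 2 ∧ d 3 = e 3 := by
  constructor
  · rintro rfl; exact ⟨rfl, rfl, rfl, rfl⟩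
  · rintro ⟨h0, h1, h2, h3⟩; ext i; fin_cases i <;> assumption

section Aux

variable (k : Type*) [Field k] [CharP k 2]

noncomputable def tgtCR : Fin 10 → (MvPolynomial (Fin 4) k →ₗ[k] k)
  | ⟨0, _⟩ => lcoeff k 0
  | ⟨1, _⟩ => lcoeff k (single 0 1)
  | ⟨2, _⟩ => lcoeff k (single 1 1)
  | ⟨3, _⟩ => lcoeff k (single 2 1)
  | ⟨4, _⟩ => lcoeff k (single 3 1)
  | ⟨5, _⟩ => lcoeff k (single 0 2) + lcoeff k (single 3 2)
  | ⟨6, _⟩ => lcoeff k (single 0 1 + single 1 1)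
  | ⟨7, _⟩ => lcoeff k (single 0 1 + single 2 1)
  | ⟨8, _⟩ => lcoeff k (single 0 1 + single 3 1)
  | ⟨9, _⟩ => lcoeff k (single 0 3) + lcoeff k (single 0 1 + single 3 2)

set_option maxHeartbeats 2000000 in
lemma tgt_gen_CR (j : Fin 10) (d : Fin 4 →₀ ℕ) (c : k) (g : MvPolynomial (Fin 4) k)
    (hg : g ∈ ({X 0 ^ 2 * X 1, X 0 ^ 2 * X 2, X 0 ^ 2 + X 3 ^ 2,
      X 1 ^ 2, X 1 * X 2, X 1 * X 3, X 2 ^ 2, X 2 * X 3, X 3 ^ 3} :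
      Set (MvPolynomial (Fin 4) k))) :
    tgtCR k j (monomial d c * g) = 0 := by
  simp only [Set.mem_insert_iff, Set.mem_singleton_iff] at hg
  rcases hg with rfl | rfl | rfl | rfl | rfl | rfl | rfl | rfl | rfl <;> fin_cases j <;>
  · simp only [tgtCR, LinearMap.add_apply, lcoeff_apply]
    try simp only [X, monomial_pow, mul_add, add_mul, monomial_mul, coeff_add, coeff_monomial,
      Finsupp.smul_single, smul_eq_mul, mul_one, one_pow, one_mul, fin4_ext_CR,
      Finsupp.add_apply, Finsupp.single_apply, Finsupp.coe_zero, Pi.zero_apply]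
    try simp (config := { decide := true }) only [Fin.isValue, if_true, if_false, ite_true,
      ite_false, add_zero, zero_add, add_eq_right, Nat.add_eq_zero, OfNat.ofNat_ne_zero,
      and_false, false_and, and_true, true_and]
    try (split_ifs <;> first | rfl | exact CharTwo.add_self_eq_zero _ | (rw [zero_add]; exact CharTwo.add_self_eq_zero _) | omega)

noncomputable def mCR : Fin 10 → MvPolynomial (Fin 4) k
  | ⟨0, _⟩ => 1
  | ⟨1, _⟩ => X 0
  | ⟨2, _⟩ => X 1
  | ⟨3, _⟩ => X 2
  | ⟨4, _⟩ => X 3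
  | ⟨5, _⟩ => X 0 ^ 2
  | ⟨6, _⟩ => X 0 * X 1
  | ⟨7, _⟩ => X 0 * X 2
  | ⟨8, _⟩ => X 0 * X 3
  | ⟨9, _⟩ => X 0 ^ 3

omit [CharP k 2] in
lemma mCR_eq (i : Fin 10) :
    (![1, X 0, X 1, X 2, X 3, X 0 ^ 2, X 0 * X 1, X 0 * X 2, X 0 * X 3, X 0 ^ 3] :
      Fin 10 → MvPolynomial (Fin 4) k) i = mCR k i := by
  fin_cases i <;> rfl

set_option maxHeartbeats 2000000 in
omit [CharP k 2] in
lemma tgt_m_CR (i j : Fin 10) : tgtCR k j (mCR k i) = if i = j then 1 else 0 := by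
  fin_cases i <;> fin_cases j <;>
  · simp only [tgtCR, mCR, LinearMap.add_apply, lcoeff_apply]
    try simp only [X, monomial_pow, mul_add, add_mul, monomial_mul, coeff_add, coeff_monomial,
      coeff_one, Finsupp.smul_single, smul_eq_mul, mul_one, one_pow, one_mul, fin4_ext_CR,
      Finsupp.add_apply, Finsupp.single_apply, Finsupp.coe_zero, Pi.zero_apply]
    try simp (config := { decide := true })
    try norm_num

lemma tgt_ker_CR (j : Fin 10) (p : MvPolynomial (Fin 4) k)
    (hp : p ∈ Ideal.span ({X 0 ^ 2 * X 1, X 0 ^ 2 * X 2, X 0 ^ 2 + X 3 ^ 2,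
      X 1 ^ 2, X 1 * X 2, X 1 * X 3, X 2 ^ 2, X 2 * X 3, X 3 ^ 3} :
      Set (MvPolynomial (Fin 4) k))) :
    tgtCR k j p = 0 := by
  have H : ∀ q ∈ Ideal.span ({X 0 ^ 2 * X 1, X 0 ^ 2 * X 2, X 0 ^ 2 + X 3 ^ 2,
      X 1 ^ 2, X 1 * X 2, X 1 * X 3, X 2 ^ 2, X 2 * X 3, X 3 ^ 3} :
      Set (MvPolynomial (Fin 4) k)), ∀ r, tgtCR k j (r * q) = 0 := by
    intro q hq
    refine Submodule.span_induction ?_ ?_ ?_ ?_ hq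
    · intro g hg r
      induction r using MvPolynomial.induction_on' with
      | monomial d c => exact tgt_gen_CR k j d c g hg
      | add p1 p2 ih1 ih2 => rw [add_mul, map_add, ih1, ih2, add_zero]
    · intro r; rw [mul_zero, map_zero]
    · intro a b _ _ ha hb r
      rw [mul_add, map_add, ha, hb, add_zero]
    · intro a x _ hx r
      rw [smul_eq_mul, show r * (a * x) = (r * a) * x by ring]
      exact hx (r * a)
  simpa using H p hp 1

end Aux


set_option maxHeartbeats 2000000 in


open MvPolynomial in
/-- Let `char k = 2` and
`R = k[w,x,y,z]/(w²x, w²y, w² + z², x², xy, xz, y², yz, z³)` (with `w = X 0`, `x = X 1`,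
`y = X 2`, `z = X 3`).  Then `dim_k R = 10` and the images of
`1, w, x, y, z, w², wx, wy, wz, w³` form a `k`-basis of `R`. -/
theorem center_relations_algebra_basis (k : Type*) [Field k] [CharP k 2]
    (I : Ideal (MvPolynomial (Fin 4) k))
    (hI : I = Ideal.span {X 0 ^ 2 * X 1, X 0 ^ 2 * X 2, X 0 ^ 2 + X 3 ^ 2,
      X 1 ^ 2, X 1 * X 2, X 1 * X 3, X 2 ^ 2, X 2 * X 3, X 3 ^ 3})
    (f : Fin 10 → MvPolynomial (Fin 4) k ⧸ I)
    (hf : f = fun i => Ideal.Quotient.mk I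
      (![1, X 0, X 1, X 2, X 3, X 0 ^ 2, X 0 * X 1, X 0 * X 2, X 0 * X 3, X 0 ^ 3] i)) :
    Module.finrank k (MvPolynomial (Fin 4) k ⧸ I) = 10 ∧
    LinearIndependent k f ∧
    Submodule.span k (Set.range f) = ⊤ := by
  have hfv : ∀ i, f i = Ideal.Quotient.mk I (mCR k i) := by
    intro i; rw [hf]; exact congrArg _ (mCR_eq k i)
  -- linear independence
  have hind : LinearIndependent k f := by
    rw [Fintype.linearIndependent_iff]
    intro c hc j
    have hq : (∑ i, c i • mCR k i) ∈ I := by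
      rw [← Ideal.Quotient.eq_zero_iff_mem]
      have hmk : Ideal.Quotient.mk I (∑ i, c i • mCR k i) = ∑ i, c i • f i := by
        rw [← Ideal.Quotient.mkₐ_eq_mk k I, map_sum]
        refine Finset.sum_congr rfl fun i _ => ?_
        rw [map_smul, hfv i, ← Ideal.Quotient.mkₐ_eq_mk k I]
      rw [hmk, hc]
    rw [hI] at hq
    have h0 := tgt_ker_CR k j _ hq
    rw [map_sum] at h0
    simp only [map_smul, tgt_m_CR, smul_eq_mul, mul_ite, mul_one, mul_zero] at h0
    rwa [Finset.sum_ite_eq' Finset.univ j c, if_pos (Finset.mem_univ j)] at h0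
  -- spanning
  have hspan : Submodule.span k (Set.range f) = ⊤ := by
    have hz : ∀ p, p ∈ I → Ideal.Quotient.mk I p ∈ Submodule.span k (Set.range f) := by
      intro p hp
      rw [Ideal.Quotient.eq_zero_iff_mem.2 hp]
      exact Submodule.zero_mem _
    have hfS : ∀ i : Fin 10, Ideal.Quotient.mk I (mCR k i) ∈ Submodule.span k (Set.range f) := by
      intro i; rw [← hfv i]; exact Submodule.subset_span (Set.mem_range_self i)
    have hA1 : (X 0 ^ 2 * X 1 : MvPolynomial (Fin 4) k) ∈ I := by
      rw [hI]; exact Ideal.subset_span (by simp)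
    have hA2 : (X 0 ^ 2 * X 2 : MvPolynomial (Fin 4) k) ∈ I := by
      rw [hI]; exact Ideal.subset_span (by simp)
    have hA3 : (X 0 ^ 2 + X 3 ^ 2 : MvPolynomial (Fin 4) k) ∈ I := by
      rw [hI]; exact Ideal.subset_span (by simp)
    have hA4 : (X 1 ^ 2 : MvPolynomial (Fin 4) k) ∈ I := by
      rw [hI]; exact Ideal.subset_span (by simp)
    have hA5 : (X 1 * X 2 : MvPolynomial (Fin 4) k) ∈ I := by
      rw [hI]; exact Ideal.subset_span (by simp)
    have hA6 : (X 1 * X 3 : MvPolynomial (Fin 4) k) ∈ I := by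
      rw [hI]; exact Ideal.subset_span (by simp)
    have hA7 : (X 2 ^ 2 : MvPolynomial (Fin 4) k) ∈ I := by
      rw [hI]; exact Ideal.subset_span (by simp)
    have hA8 : (X 2 * X 3 : MvPolynomial (Fin 4) k) ∈ I := by
      rw [hI]; exact Ideal.subset_span (by simp)
    have hA9 : (X 3 ^ 3 : MvPolynomial (Fin 4) k) ∈ I := by
      rw [hI]; exact Ideal.subset_span (by simp)
    have hA10 : (X 0 ^ 2 * X 3 : MvPolynomial (Fin 4) k) ∈ I := by
      rw [show (X 0 ^ 2 * X 3 : MvPolynomial (Fin 4) k)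
          = X 3 * (X 0 ^ 2 + X 3 ^ 2) - X 3 ^ 3 from by ring]
      exact sub_mem (I.mul_mem_left _ hA3) hA9
    have hA11 : (X 0 ^ 4 : MvPolynomial (Fin 4) k) ∈ I := by
      rw [show (X 0 ^ 4 : MvPolynomial (Fin 4) k)
          = (X 0 ^ 2 - X 3 ^ 2) * (X 0 ^ 2 + X 3 ^ 2) + X 3 * X 3 ^ 3 from by ring]
      exact add_mem (I.mul_mem_left _ hA3) (I.mul_mem_left _ hA9)
    have hm0 : ∀ s ∈ Submodule.span k (Set.range f),
        s * Ideal.Quotient.mk I (X 0) ∈ Submodule.span k (Set.range f) := by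
      intro s hs
      refine Submodule.span_induction ?_ ?_ ?_ ?_ hs
      · rintro _ ⟨i0, rfl⟩
        rw [hfv i0]
        fin_cases i0 <;> rw [← map_mul] <;> simp only [mCR]
        · rw [show ((1 : MvPolynomial (Fin 4) k) * X 0) = X 0 from by ring]
          exact hfS ⟨1, by norm_num⟩
        · rw [show (X 0 * X 0 : MvPolynomial (Fin 4) k) = X 0 ^ 2 from by ring]
          exact hfS ⟨5, by norm_num⟩
        · rw [show (X 1 * X 0 : MvPolynomial (Fin 4) k) = X 0 * X 1 from by ring]
          exact hfS ⟨6, by norm_num⟩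
        · rw [show (X 2 * X 0 : MvPolynomial (Fin 4) k) = X 0 * X 2 from by ring]
          exact hfS ⟨7, by norm_num⟩
        · rw [show (X 3 * X 0 : MvPolynomial (Fin 4) k) = X 0 * X 3 from by ring]
          exact hfS ⟨8, by norm_num⟩
        · rw [show (X 0 ^ 2 * X 0 : MvPolynomial (Fin 4) k) = X 0 ^ 3 from by ring]
          exact hfS ⟨9, by norm_num⟩
        · refine hz _ ?_
          rw [show (X 0 * X 1 * X 0 : MvPolynomial (Fin 4) k) = X 0 ^ 2 * X 1 from by ring]
          exact hA1
        · refine hz _ ?_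
          rw [show (X 0 * X 2 * X 0 : MvPolynomial (Fin 4) k) = X 0 ^ 2 * X 2 from by ring]
          exact hA2
        · refine hz _ ?_
          rw [show (X 0 * X 3 * X 0 : MvPolynomial (Fin 4) k) = X 0 ^ 2 * X 3 from by ring]
          exact hA10
        · refine hz _ ?_
          rw [show (X 0 ^ 3 * X 0 : MvPolynomial (Fin 4) k) = X 0 ^ 4 from by ring]
          exact hA11
      · rw [zero_mul]; exact Submodule.zero_mem _
      · intro a b _ _ ha hb; rw [add_mul]; exact Submodule.add_mem _ ha hb
      · intro a x _ hx; rw [smul_mul_assoc]; exact Submodule.smul_mem _ a hx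
    have hm1 : ∀ s ∈ Submodule.span k (Set.range f),
        s * Ideal.Quotient.mk I (X 1) ∈ Submodule.span k (Set.range f) := by
      intro s hs
      refine Submodule.span_induction ?_ ?_ ?_ ?_ hs
      · rintro _ ⟨i0, rfl⟩
        rw [hfv i0]
        fin_cases i0 <;> rw [← map_mul] <;> simp only [mCR]
        · rw [show ((1 : MvPolynomial (Fin 4) k) * X 1) = X 1 from by ring]
          exact hfS ⟨2, by norm_num⟩
        · exact hfS ⟨6, by norm_num⟩
        · refine hz _ ?_
          rw [show (X 1 * X 1 : MvPolynomial (Fin 4) k) = X 1 ^ 2 from by ring]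
          exact hA4
        · refine hz _ ?_
          rw [show (X 2 * X 1 : MvPolynomial (Fin 4) k) = X 1 * X 2 from by ring]
          exact hA5
        · refine hz _ ?_
          rw [show (X 3 * X 1 : MvPolynomial (Fin 4) k) = X 1 * X 3 from by ring]
          exact hA6
        · exact hz _ hA1
        · refine hz _ ?_
          rw [show (X 0 * X 1 * X 1 : MvPolynomial (Fin 4) k) = X 0 * X 1 ^ 2 from by ring]
          exact I.mul_mem_left _ hA4
        · refine hz _ ?_
          rw [show (X 0 * X 2 * X 1 : MvPolynomial (Fin 4) k) = X 0 * (X 1 * X 2) from by ring]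
          exact I.mul_mem_left _ hA5
        · refine hz _ ?_
          rw [show (X 0 * X 3 * X 1 : MvPolynomial (Fin 4) k) = X 0 * (X 1 * X 3) from by ring]
          exact I.mul_mem_left _ hA6
        · refine hz _ ?_
          rw [show (X 0 ^ 3 * X 1 : MvPolynomial (Fin 4) k) = X 0 * (X 0 ^ 2 * X 1) from by ring]
          exact I.mul_mem_left _ hA1
      · rw [zero_mul]; exact Submodule.zero_mem _
      · intro a b _ _ ha hb; rw [add_mul]; exact Submodule.add_mem _ ha hb
      · intro a x _ hx; rw [smul_mul_assoc]; exact Submodule.smul_mem _ a hx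
    have hm2 : ∀ s ∈ Submodule.span k (Set.range f),
        s * Ideal.Quotient.mk I (X 2) ∈ Submodule.span k (Set.range f) := by
      intro s hs
      refine Submodule.span_induction ?_ ?_ ?_ ?_ hs
      · rintro _ ⟨i0, rfl⟩
        rw [hfv i0]
        fin_cases i0 <;> rw [← map_mul] <;> simp only [mCR]
        · rw [show ((1 : MvPolynomial (Fin 4) k) * X 2) = X 2 from by ring]
          exact hfS ⟨3, by norm_num⟩
        · exact hfS ⟨7, by norm_num⟩
        · exact hz _ hA5
        · refine hz _ ?_
          rw [show (X 2 * X 2 : MvPolynomial (Fin 4) k) = X 2 ^ 2 from by ring]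
          exact hA7
        · refine hz _ ?_
          rw [show (X 3 * X 2 : MvPolynomial (Fin 4) k) = X 2 * X 3 from by ring]
          exact hA8
        · exact hz _ hA2
        · refine hz _ ?_
          rw [show (X 0 * X 1 * X 2 : MvPolynomial (Fin 4) k) = X 0 * (X 1 * X 2) from by ring]
          exact I.mul_mem_left _ hA5
        · refine hz _ ?_
          rw [show (X 0 * X 2 * X 2 : MvPolynomial (Fin 4) k) = X 0 * X 2 ^ 2 from by ring]
          exact I.mul_mem_left _ hA7
        · refine hz _ ?_
          rw [show (X 0 * X 3 * X 2 : MvPolynomial (Fin 4) k) = X 0 * (X 2 * X 3) from by ring]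
          exact I.mul_mem_left _ hA8
        · refine hz _ ?_
          rw [show (X 0 ^ 3 * X 2 : MvPolynomial (Fin 4) k) = X 0 * (X 0 ^ 2 * X 2) from by ring]
          exact I.mul_mem_left _ hA2
      · rw [zero_mul]; exact Submodule.zero_mem _
      · intro a b _ _ ha hb; rw [add_mul]; exact Submodule.add_mem _ ha hb
      · intro a x _ hx; rw [smul_mul_assoc]; exact Submodule.smul_mem _ a hx
    have hm3 : ∀ s ∈ Submodule.span k (Set.range f),
        s * Ideal.Quotient.mk I (X 3) ∈ Submodule.span k (Set.range f) := by
      intro s hs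
      refine Submodule.span_induction ?_ ?_ ?_ ?_ hs
      · rintro _ ⟨i0, rfl⟩
        rw [hfv i0]
        fin_cases i0 <;> rw [← map_mul] <;> simp only [mCR]
        · rw [show ((1 : MvPolynomial (Fin 4) k) * X 3) = X 3 from by ring]
          exact hfS ⟨4, by norm_num⟩
        · exact hfS ⟨8, by norm_num⟩
        · exact hz _ hA6
        · exact hz _ hA8
        · rw [show (X 3 * X 3 : MvPolynomial (Fin 4) k)
              = (X 0 ^ 2 + X 3 ^ 2) - X 0 ^ 2 from by ring, map_sub,
            Ideal.Quotient.eq_zero_iff_mem.2 hA3, zero_sub]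
          exact Submodule.neg_mem _ (hfS ⟨5, by norm_num⟩)
        · exact hz _ hA10
        · refine hz _ ?_
          rw [show (X 0 * X 1 * X 3 : MvPolynomial (Fin 4) k) = X 0 * (X 1 * X 3) from by ring]
          exact I.mul_mem_left _ hA6
        · refine hz _ ?_
          rw [show (X 0 * X 2 * X 3 : MvPolynomial (Fin 4) k) = X 0 * (X 2 * X 3) from by ring]
          exact I.mul_mem_left _ hA8
        · rw [show (X 0 * X 3 * X 3 : MvPolynomial (Fin 4) k)
              = X 0 * (X 0 ^ 2 + X 3 ^ 2) - X 0 ^ 3 from by ring, map_sub,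
            Ideal.Quotient.eq_zero_iff_mem.2 (I.mul_mem_left _ hA3), zero_sub]
          exact Submodule.neg_mem _ (hfS ⟨9, by norm_num⟩)
        · refine hz _ ?_
          rw [show (X 0 ^ 3 * X 3 : MvPolynomial (Fin 4) k) = X 0 * (X 0 ^ 2 * X 3) from by ring]
          exact I.mul_mem_left _ hA10
      · rw [zero_mul]; exact Submodule.zero_mem _
      · intro a b _ _ ha hb; rw [add_mul]; exact Submodule.add_mem _ ha hb
      · intro a x _ hx; rw [smul_mul_assoc]; exact Submodule.smul_mem _ a hx
    have hall : ∀ p : MvPolynomial (Fin 4) k,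
        Ideal.Quotient.mk I p ∈ Submodule.span k (Set.range f) := by
      intro p
      induction p using MvPolynomial.induction_on with
      | C a =>
          have h1 : Ideal.Quotient.mk I (C a : MvPolynomial (Fin 4) k)
              = a • Ideal.Quotient.mk I (1 : MvPolynomial (Fin 4) k) := by
            rw [show (C a : MvPolynomial (Fin 4) k) = a • (1 : MvPolynomial (Fin 4) k) from by
              rw [MvPolynomial.smul_eq_C_mul, mul_one]]
            rw [← Ideal.Quotient.mkₐ_eq_mk k I, map_smul]
          rw [h1]
          exact Submodule.smul_mem _ a (hfS ⟨0, by norm_num⟩)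
      | add p q hp hq => rw [map_add]; exact Submodule.add_mem _ hp hq
      | mul_X p i hp =>
          rw [map_mul]
          fin_cases i
          · exact hm0 _ hp
          · exact hm1 _ hp
          · exact hm2 _ hp
          · exact hm3 _ hp
    refine Submodule.eq_top_iff'.2 fun q => ?_
    obtain ⟨p, rfl⟩ := Ideal.Quotient.mk_surjective q
    exact hall p
  refine ⟨?_, hind, hspan⟩
  have b : Module.Basis (Fin 10) k (MvPolynomial (Fin 4) k ⧸ I) := Module.Basis.mk hind hspan.ge
  rw [Module.finrank_eq_card_basis b, Fintype.card_fin]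
end
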